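/- arXiv:1910.05324 — 2 statements merged into one kernel-verified Lean document; each statement's English description precedes it below -/
import Mathlib

section
/- Let (X, f) be a topologically chain transitive dynamical system on a uniform space and E an entourage. Define x ∼_E y iff there exists an E-chain from x to y whose length is a multiple of ι_E (the common gcd of loop lengths). Then ∼_E is an equivalence relation on X. -/
open Set Filter Function

variable {X : Type*}

/-- An `E`-chain of length `n` from `x` to `y` for the map `f`. -/
def ChainFrom (f : X → X) (E : Set (X × X)) (n : ℕ) (x y : X) : Prop :=
  ∃ c : ℕ → X, c 0 = x ∧ c n = y ∧ ∀ i < n, (f (c i), c (i + 1)) ∈ E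

/-- Topological chain transitivity on a uniform space. -/
def ChainTransitive [UniformSpace X] (f : X → X) : Prop :=
  ∀ E ∈ uniformity X, ∀ x y : X, ∃ n ≥ 1, ChainFrom f E n x y

/-- Lengths of `E`-chains from `x` to itself (loops). -/
def LoopLengths (f : X → X) (E : Set (X × X)) (x : X) : Set ℕ :=
  {n | 1 ≤ n ∧ ChainFrom f E n x x}

/-- `g` is the greatest common divisor of the set `S` of naturals. -/
def IsGcdOfSet (g : ℕ) (S : Set ℕ) : Prop :=
  (∀ n ∈ S, g ∣ n) ∧ ∀ d : ℕ, (∀ n ∈ S, d ∣ n) → d ∣ g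

/-- The relation `x ∼_E y`: some `E`-chain from `x` to `y` has length a multiple of `ι`. -/
def SimE (f : X → X) (E : Set (X × X)) (ι : ℕ) (x y : X) : Prop :=
  ∃ n, ι ∣ n ∧ ChainFrom f E n x y

/-- Topological shadowing property on a uniform space. -/
def Shadowing [UniformSpace X] (f : X → X) : Prop :=
  ∀ E ∈ uniformity X, ∃ D ∈ uniformity X,
    ∀ x : ℕ → X, (∀ i, (f (x i), x (i + 1)) ∈ D) →
      ∃ y, ∀ n, (f^[n] y, x n) ∈ E

/-- Topological chain mixing on a uniform space. -/
def ChainMixing [UniformSpace X] (f : X → X) : Prop :=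
  ∀ D ∈ uniformity X, ∀ x y : X, ∃ N ≥ 1, ∀ n ≥ N, ChainFrom f D n x y

/-- A non-wandering point of `f`. -/
def NonWandering [TopologicalSpace X] (f : X → X) (x : X) : Prop :=
  ∀ V ∈ nhds x, ∃ n ≥ 1, (V ∩ f^[n] ⁻¹' V).Nonempty

/-- Topological transitivity. -/
def TopTransitive [TopologicalSpace X] (f : X → X) : Prop :=
  ∀ U V : Set X, IsOpen U → IsOpen V → U.Nonempty → V.Nonempty →
    ∃ n : ℕ, (U ∩ f^[n] ⁻¹' V).Nonempty

/-- A syndetic set of natural numbers (bounded gaps). -/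
def Syndetic (A : Set ℕ) : Prop :=
  ∃ k : ℕ, ∀ n : ℕ, ∃ m, n ≤ m ∧ m ≤ n + k ∧ m ∈ A

/-- A minimal (almost periodic) point of `f`. -/
def MinimalPt [TopologicalSpace X] (f : X → X) (y : X) : Prop :=
  ∀ V ∈ nhds y, Syndetic {n : ℕ | f^[n] y ∈ V}

/-- Equicontinuity of a dynamical system on a uniform space. -/
def Equicont [UniformSpace X] (f : X → X) : Prop :=
  ∀ E ∈ uniformity X, ∃ D ∈ uniformity X, ∀ n : ℕ, ∀ p ∈ D, (f^[n] p.1, f^[n] p.2) ∈ E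

namespace ChainFrom

variable {f : X → X} {E : Set (X × X)}

lemma refl (x : X) : ChainFrom f E 0 x x :=
  ⟨fun _ => x, rfl, rfl, fun _ hi => absurd hi (Nat.not_lt_zero _)⟩

lemma append {n m : ℕ} {x y z : X} (hxy : ChainFrom f E n x y) (hyz : ChainFrom f E m y z) :
    ChainFrom f E (n + m) x z := by
  obtain ⟨c, hc0, hcn, hc⟩ := hxy
  obtain ⟨d, hd0, hdm, hd⟩ := hyz
  refine ⟨fun i => if i ≤ n then c i else d (i - n), by simp [hc0], ?_, fun i hi => ?_⟩
  · rcases Nat.eq_zero_or_pos m with rfl | hm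
    · simp [hcn, ← hd0, hdm]
    · simp [show ¬ n + m ≤ n by omega, hdm]
  · rcases lt_trichotomy i n with hin | rfl | hin
    · by_cases hsucc : i + 1 = n
      · simpa [hin.le, hsucc, hcn, ← hd0] using hc i hin
      · simpa [hin.le, show i + 1 ≤ n by omega] using hc i hin
    · simpa [hcn, ← hd0, Nat.add_sub_cancel_left] using hd 0 (by omega)
    · have hshift : i + 1 - n = i - n + 1 := by omega
      simpa [show ¬ i ≤ n by omega, show ¬ i + 1 ≤ n by omega, hshift]
        using hd (i - n) (by omega)

end ChainFrom

lemma dvd_of_chainFrom_of_dvd_loopLengths {f : X → X} {E : Set (X × X)} {ι n m : ℕ} {x y : X}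
    (hloops : ∀ k ∈ LoopLengths f E x, ι ∣ k) (hn : ι ∣ n) (hxy : ChainFrom f E n x y)
    (hm : 1 ≤ m) (hyx : ChainFrom f E m y x) : ι ∣ m :=
  (Nat.dvd_add_right hn).mp (hloops _ ⟨by omega, hxy.append hyx⟩)

theorem simE_equivalence_general [UniformSpace X] (f : X → X)
    (ht : ChainTransitive f)
    (E : Set (X × X)) (hE : E ∈ uniformity X)
    (ι : ℕ) (hgcd : ∀ y : X, IsGcdOfSet ι (LoopLengths f E y)) :
    Equivalence (SimE f E ι) := by
  refine ⟨fun x => ⟨0, dvd_zero ι, ChainFrom.refl x⟩, ?_, ?_⟩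
  · rintro x y ⟨n, hn, hxy⟩
    obtain ⟨m, hm, hyx⟩ := ht E hE y x
    exact ⟨m, dvd_of_chainFrom_of_dvd_loopLengths (hgcd x).1 hn hxy hm hyx, hyx⟩
  · rintro x y z ⟨n, hn, hxy⟩ ⟨m, hm, hyz⟩
    exact ⟨n + m, dvd_add hn hm, hxy.append hyz⟩

theorem simE_equivalence [UniformSpace X] (f : X → X)
    (hf : UniformContinuous f) (ht : ChainTransitive f)
    (E : Set (X × X)) (hE : E ∈ uniformity X)
    (ι : ℕ) (hι : 1 ≤ ι) (hgcd : ∀ y : X, IsGcdOfSet ι (LoopLengths f E y)) :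
    Equivalence (SimE f E ι) :=
  simE_equivalence_general f ht E hE ι hgcd
end

section
/- A dynamical system (X, f) on a compact uniform space is totally topologically chain transitive if and only if it is topologically chain mixing. -/
/-!
Loops at `x` of coprime lengths `a` and `b` combine into loops of every length `≥ a * b`. Chain
transitivity of `f` gives a loop of some length `a`, and chain transitivity of `f^[a]` gives a
chain from `f x` back to `x` of length divisible by `a`, hence a loop of length `1 + a * m`;
appending a fixed chain from `x` to `y` yields chains of all large lengths. Conversely, uniform
continuity lets an `f`-chain of length `n` with fine enough jumps be read as a single jump of
`f^[n]`, so cutting a long `f`-chain of length `n * N` into blocks of length `n` gives an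
`f^[n]`-chain.
-/

open Set Filter Function

variable {X : Type*}

namespace ChainFrom

variable {f : X → X} {E F : Set (X × X)} {m n : ℕ} {x y z : X}

theorem zero_iff : ChainFrom f E 0 x y ↔ x = y :=
  ⟨fun ⟨_, h0, hy, _⟩ => h0 ▸ hy,
    fun h => ⟨fun _ => x, rfl, h, fun _ hi => absurd hi (Nat.not_lt_zero _)⟩⟩

theorem succ_iff : ChainFrom f E (n + 1) x y ↔ ∃ z, ChainFrom f E n x z ∧ (f z, y) ∈ E := by
  constructor
  · rintro ⟨c, h0, hy, hc⟩
    exact ⟨c n, ⟨c, h0, rfl, fun i hi => hc i (by omega)⟩, hy ▸ hc n n.lt_succ_self⟩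
  · rintro ⟨z, ⟨c, h0, hz, hc⟩, hzy⟩
    refine ⟨update c (n + 1) y, by simp [h0], by simp, fun i hi => ?_⟩
    rw [update_of_ne (by omega)]
    rcases Nat.lt_succ_iff_lt_or_eq.mp hi with hi | rfl
    · rw [update_of_ne (by omega)]
      exact hc i hi
    · simpa [hz] using hzy

theorem one_iff : ChainFrom f E 1 x y ↔ (f x, y) ∈ E :=
  succ_iff.trans <| by simp [zero_iff]

theorem mono (hEF : E ⊆ F) : ChainFrom f E n x y → ChainFrom f F n x y :=
  fun ⟨c, h0, hy, hc⟩ => ⟨c, h0, hy, fun i hi => hEF (hc i hi)⟩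

theorem trans (hxy : ChainFrom f E m x y) (hyz : ChainFrom f E n y z) :
    ChainFrom f E (m + n) x z := by
  induction n generalizing z with
  | zero => exact zero_iff.mp hyz ▸ hxy
  | succ n ih =>
    obtain ⟨w, hyw, hwz⟩ := succ_iff.mp hyz
    exact succ_iff.mpr ⟨w, ih hyw, hwz⟩

theorem add_iff :
    ChainFrom f E (m + n) x z ↔ ∃ y, ChainFrom f E m x y ∧ ChainFrom f E n y z := by
  refine ⟨fun h => ?_, fun ⟨y, hxy, hyz⟩ => hxy.trans hyz⟩
  induction n generalizing z with
  | zero => exact ⟨z, h, zero_iff.mpr rfl⟩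
  | succ n ih =>
    obtain ⟨w, hxw, hwz⟩ := succ_iff.mp h
    obtain ⟨y, hxy, hyw⟩ := ih hxw
    exact ⟨y, hxy, succ_iff.mpr ⟨w, hyw, hwz⟩⟩

theorem orbit (hE : ∀ z, (z, z) ∈ E) (n : ℕ) (x : X) : ChainFrom f E n x (f^[n] x) :=
  ⟨fun i => f^[i] x, rfl, rfl, fun i _ => iterate_succ_apply' f i x ▸ hE _⟩

theorem of_iterate_mem (hE : ∀ z, (z, z) ∈ E) (hn : 1 ≤ n) (h : (f^[n] x, y) ∈ E) :
    ChainFrom f E n x y := by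
  obtain ⟨k, rfl⟩ := Nat.exists_eq_add_of_le' hn
  exact (orbit hE k x).trans (one_iff.mpr (iterate_succ_apply' f k x ▸ h))

theorem of_chainFrom_iterate (hE : ∀ z, (z, z) ∈ E) (hn : 1 ≤ n)
    (h : ChainFrom (f^[n]) E m x y) : ChainFrom f E (n * m) x y := by
  induction m generalizing y with
  | zero => exact zero_iff.mpr (zero_iff.mp h)
  | succ m ih =>
    obtain ⟨z, hxz, hzy⟩ := succ_iff.mp h
    exact (ih hxz).trans (of_iterate_mem hE hn hzy)

theorem chainFrom_iterate (hstep : ∀ x y, ChainFrom f F n x y → (f^[n] x, y) ∈ E)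
    (h : ChainFrom f F (n * m) x y) : ChainFrom (f^[n]) E m x y := by
  induction m generalizing y with
  | zero => exact zero_iff.mpr (zero_iff.mp h)
  | succ m ih =>
    obtain ⟨z, hxz, hzy⟩ := add_iff.mp h
    exact succ_iff.mpr ⟨z, ih hxz, hstep z y hzy⟩

end ChainFrom

theorem UniformContinuous.exists_chainFrom_imp_iterate_mem [UniformSpace X] {f : X → X}
    (hf : UniformContinuous f) (n : ℕ) {E : Set (X × X)} (hE : E ∈ uniformity X) :
    ∃ D ∈ uniformity X, ∀ x y, ChainFrom f D n x y → (f^[n] x, y) ∈ E := by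
  induction n generalizing E with
  | zero => exact ⟨E, hE, fun x y h => ChainFrom.zero_iff.mp h ▸ refl_mem_uniformity hE⟩
  | succ n ih =>
    obtain ⟨E', hE', hE'E⟩ := comp_mem_uniformity_sets hE
    obtain ⟨D, hD, hDE⟩ := ih (hf hE')
    refine ⟨D ∩ E', inter_mem hD hE', fun x y h => ?_⟩
    obtain ⟨z, hxz, hzy⟩ := ChainFrom.succ_iff.mp h
    rw [iterate_succ_apply']
    exact hE'E ⟨f z, hDE x z (hxz.mono inter_subset_left), hzy.2⟩

theorem AddSubmonoid.mem_of_coprime_of_mul_le {S : AddSubmonoid ℕ} {a b n : ℕ} (ha : a ∈ S)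
    (hb : b ∈ S) (hab : a.Coprime b) (hn : a * b ≤ n) : n ∈ S := by
  obtain ⟨i, j, rfl⟩ := Nat.exists_add_mul_eq_of_gcd_dvd_of_mul_pred_le a b n
    (by simp [hab.gcd_eq_one]) ((Nat.mul_le_mul a.pred_le b.pred_le).trans hn)
  exact add_mem (S.nsmul_mem ha i) (S.nsmul_mem hb j)

def loopLengthSubmonoid (f : X → X) (E : Set (X × X)) (x : X) : AddSubmonoid ℕ where
  carrier := {n | ChainFrom f E n x x}
  zero_mem' := ChainFrom.zero_iff.mpr rfl
  add_mem' := ChainFrom.trans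

section

variable [UniformSpace X] {f : X → X}

theorem chainMixing_of_forall_chainTransitive_iterate
    (hT : ∀ n : ℕ, 1 ≤ n → ChainTransitive (f^[n])) : ChainMixing f := by
  intro D hD x y
  have hDrefl : ∀ z, (z, z) ∈ D := fun z => refl_mem_uniformity hD
  have h₁ : ChainTransitive f := iterate_one f ▸ hT 1 le_rfl
  obtain ⟨a, ha, hloop_a⟩ := h₁ D hD x x
  obtain ⟨L, hL, hxy⟩ := h₁ D hD x y
  obtain ⟨m, -, hback⟩ := hT a ha D hD (f x) x
  have hloop_b : ChainFrom f D (1 + a * m) x x :=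
    (ChainFrom.one_iff.mpr (hDrefl _)).trans (hback.of_chainFrom_iterate hDrefl ha)
  have hcop : a.Coprime (1 + a * m) := by simp [add_comm 1]
  refine ⟨a * (1 + a * m) + L, by omega, fun n hn => ?_⟩
  have hloop : n - L ∈ loopLengthSubmonoid f D x :=
    AddSubmonoid.mem_of_coprime_of_mul_le hloop_a hloop_b hcop (by omega)
  simpa [Nat.sub_add_cancel (show L ≤ n by omega)] using ChainFrom.trans hloop hxy

theorem ChainMixing.chainTransitive_iterate (hf : UniformContinuous f) (hM : ChainMixing f)
    {n : ℕ} (hn : 1 ≤ n) : ChainTransitive (f^[n]) := by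
  intro E hE x y
  obtain ⟨D, hD, hstep⟩ := hf.exists_chainFrom_imp_iterate_mem n hE
  obtain ⟨N, hN, hchain⟩ := hM D hD x y
  exact ⟨N, hN, (hchain _ (Nat.le_mul_of_pos_left N hn)).chainFrom_iterate hstep⟩

end

theorem totally_chain_transitive_iff_chain_mixing_general [UniformSpace X]
    (f : X → X) (hf : UniformContinuous f) :
    (∀ n : ℕ, 1 ≤ n → ChainTransitive (f^[n])) ↔ ChainMixing f :=
  ⟨chainMixing_of_forall_chainTransitive_iterate,
    fun hM _ hn => hM.chainTransitive_iterate hf hn⟩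

theorem totally_chain_transitive_iff_chain_mixing [UniformSpace X] [CompactSpace X]
    (f : X → X) (hf : UniformContinuous f) :
    (∀ n : ℕ, 1 ≤ n → ChainTransitive (f^[n])) ↔ ChainMixing f :=
  totally_chain_transitive_iff_chain_mixing_general f hf
end
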